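/- arXiv:1003.5181 — 6 statements merged into one kernel-verified Lean document; each statement's English description precedes it below -/
import Mathlib

section
/- Suppose S ⊆ A is a finite set and δ₀ > 0 form a Kazhdan pair, in the sense that for every complex Hilbert space K and every unital *-homomorphism ρ : A → B(K), if there exists a nonzero ξ ∈ K with ‖ρ(a)ξ − ε(a)ξ‖ < δ₀‖ξ‖ for all a ∈ S, then there exists a nonzero η ∈ K with ρ(a)η = ε(a)η for all a ∈ A. Then for every δ > 0 the following holds: for every complex Hilbert space H, every unital *-homomorphism π : A → B(H), and every nonzero ξ ∈ H satisfying ‖π(a)ξ − ε(a)ξ‖ < δ₀·δ·‖ξ‖ for all a ∈ S, there exists a vector η ∈ H with π(a)η = ε(a)η for all a ∈ A and ‖ξ − η‖ < δ‖ξ‖. -/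
/-! The invariant vectors form a closed subspace `V`, and since `π (star a)` is the adjoint of
`π a`, its orthogonal complement `Vᗮ` is invariant as well, so `π` restricts to a
representation on `Vᗮ` without nonzero invariant vectors. Let `η` be the orthogonal projection
of `ξ` onto `V`. Because `η` is invariant, `ξ - η ∈ Vᗮ` moves under each `a ∈ S` exactly as
much as `ξ` does. If `‖ξ - η‖ ≥ δ ‖ξ‖`, this makes `ξ - η` a `(S, δ₀)`-almost invariant vector
of the restricted representation, and the Kazhdan property would produce a nonzero invariant
vector in `Vᗮ`. -/

universe u

open ContinuousLinearMap Submodule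

section Representation

variable {A : Type*} [Semiring A] [Algebra ℂ A] [Star A]
  {H : Type*} [NormedAddCommGroup H] [InnerProductSpace ℂ H] [CompleteSpace H]

noncomputable def StarAlgHom.restrictToInvariant (π : A →⋆ₐ[ℂ] (H →L[ℂ] H))
    (K : Submodule ℂ H) [CompleteSpace K] (hK : ∀ a, ∀ x ∈ K, π a x ∈ K) :
    A →⋆ₐ[ℂ] (K →L[ℂ] K) where
  toFun a := (π a).restrict (hK a)
  map_one' := by ext; simp
  map_mul' a b := by ext; simp
  map_zero' := by ext; simp
  map_add' a b := by ext; simp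
  commutes' c := by ext; simp [Algebra.algebraMap_eq_smul_one]
  map_star' a := by
    rw [star_eq_adjoint, eq_adjoint_iff]
    intro x y
    simp only [coe_inner, coe_restrict_apply, map_star, star_eq_adjoint, adjoint_inner_left]

noncomputable def invariantVectors (π : A →⋆ₐ[ℂ] (H →L[ℂ] H)) (ε : A → ℂ) : Submodule ℂ H :=
  ⨅ a, (π a - ε a • 1 : H →L[ℂ] H).ker

variable {π : A →⋆ₐ[ℂ] (H →L[ℂ] H)} {ε : A → ℂ}

theorem mem_invariantVectors {x : H} : x ∈ invariantVectors π ε ↔ ∀ a, π a x = ε a • x := by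
  simp [invariantVectors, sub_eq_zero]

variable (π ε) in
theorem isClosed_invariantVectors : IsClosed (invariantVectors π ε : Set H) := by
  rw [invariantVectors, coe_iInf]
  exact isClosed_iInter fun a => isClosed_ker _

variable (π ε) in
instance : CompleteSpace (invariantVectors π ε) :=
  (isClosed_invariantVectors π ε).completeSpace_coe

theorem apply_mem_invariantVectors (a : A) {x : H} (hx : x ∈ invariantVectors π ε) :
    π a x ∈ invariantVectors π ε := by
  rw [mem_invariantVectors.1 hx a]
  exact smul_mem _ _ hx

theorem apply_mem_orthogonal_invariantVectors (a : A) {x : H}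
    (hx : x ∈ (invariantVectors π ε)ᗮ) :
    π a x ∈ (invariantVectors π ε)ᗮ := by
  refine orthogonal_mem_invtSubmodule (T := π a) ?_ hx
  rw [← star_eq_adjoint, ← map_star]
  exact fun y hy => apply_mem_invariantVectors (star a) hy

theorem apply_sub_sub_smul_sub_of_mem_invariantVectors {η : H} (hη : η ∈ invariantVectors π ε)
    (a : A) (ξ : H) : π a (ξ - η) - ε a • (ξ - η) = π a ξ - ε a • ξ := by
  rw [map_sub, mem_invariantVectors.1 hη a, smul_sub, sub_sub_sub_cancel_right]

end Representation

def IsKazhdanPair {A : Type*} [Semiring A] [Algebra ℂ A] [Star A] (ε : A →⋆ₐ[ℂ] ℂ)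
    (S : Finset A) (δ₀ : ℝ) : Prop :=
  ∀ (K : Type u) [NormedAddCommGroup K] [InnerProductSpace ℂ K] [CompleteSpace K]
    (ρ : A →⋆ₐ[ℂ] (K →L[ℂ] K)),
    (∃ ξ : K, ξ ≠ 0 ∧ ∀ a ∈ S, ‖ρ a ξ - ε a • ξ‖ < δ₀ * ‖ξ‖) →
    ∃ η : K, η ≠ 0 ∧ ∀ a : A, ρ a η = ε a • η

theorem IsKazhdanPair.eq_zero_of_mem_orthogonal_invariantVectors {A : Type*} [Semiring A]
    [Algebra ℂ A] [Star A] {ε : A →⋆ₐ[ℂ] ℂ} {S : Finset A} {δ₀ : ℝ}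
    (hS : IsKazhdanPair.{u} ε S δ₀) {H : Type u} [NormedAddCommGroup H] [InnerProductSpace ℂ H]
    [CompleteSpace H] (π : A →⋆ₐ[ℂ] (H →L[ℂ] H)) {ζ : H} (hζ : ζ ∈ (invariantVectors π ε)ᗮ)
    (hζS : ∀ a ∈ S, ‖π a ζ - ε a • ζ‖ < δ₀ * ‖ζ‖) : ζ = 0 := by
  by_contra hζ0
  obtain ⟨η, hη0, hηinv⟩ :=
    hS _ (π.restrictToInvariant _ fun a _ => apply_mem_orthogonal_invariantVectors a)
      ⟨⟨ζ, hζ⟩, by simpa using hζ0, hζS⟩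
  have hηV : (η : H) ∈ invariantVectors π ε :=
    mem_invariantVectors.2 fun a => congrArg Subtype.val (hηinv a)
  exact hη0 (Subtype.ext (disjoint_def.1 (orthogonal_disjoint _) (η : H) hηV η.2))

theorem kazhdan_pair_with_continuity_constants_general
    {A : Type*} [NormedRing A] [StarRing A] [NormedAlgebra ℂ A]
    (ε : A →⋆ₐ[ℂ] ℂ) (S : Finset A) (δ₀ : ℝ) (hδ₀ : 0 < δ₀)
    (hKazhdan : ∀ (K : Type u) [NormedAddCommGroup K] [InnerProductSpace ℂ K]
      [CompleteSpace K] (ρ : A →⋆ₐ[ℂ] (K →L[ℂ] K)),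
      (∃ ξ : K, ξ ≠ 0 ∧ ∀ a ∈ S, ‖ρ a ξ - ε a • ξ‖ < δ₀ * ‖ξ‖) →
      ∃ η : K, η ≠ 0 ∧ ∀ a : A, ρ a η = ε a • η)
    (δ : ℝ) (hδ : 0 < δ)
    (H : Type u) [NormedAddCommGroup H] [InnerProductSpace ℂ H] [CompleteSpace H]
    (π : A →⋆ₐ[ℂ] (H →L[ℂ] H))
    (ξ : H) (hξ : ξ ≠ 0)
    (hinv : ∀ a ∈ S, ‖π a ξ - ε a • ξ‖ < δ₀ * δ * ‖ξ‖) :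
    ∃ η : H, (∀ a : A, π a η = ε a • η) ∧ ‖ξ - η‖ < δ * ‖ξ‖ := by
  have hS : IsKazhdanPair.{u} ε S δ₀ := hKazhdan
  set V := invariantVectors π ε
  set η := V.starProjection ξ
  refine ⟨η, mem_invariantVectors.1 (V.starProjection_apply_mem ξ), ?_⟩
  by_contra! hfar
  have hgap : ∀ a ∈ S, ‖π a (ξ - η) - ε a • (ξ - η)‖ < δ₀ * ‖ξ - η‖ := fun a ha =>
    calc ‖π a (ξ - η) - ε a • (ξ - η)‖ = ‖π a ξ - ε a • ξ‖ := by
          rw [apply_sub_sub_smul_sub_of_mem_invariantVectors (V.starProjection_apply_mem ξ)]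
      _ < δ₀ * (δ * ‖ξ‖) := mul_assoc δ₀ δ ‖ξ‖ ▸ hinv a ha
      _ ≤ δ₀ * ‖ξ - η‖ := by gcongr
  have hξη : ξ - η = 0 :=
    hS.eq_zero_of_mem_orthogonal_invariantVectors π (V.sub_starProjection_mem_orthogonal ξ) hgap
  rw [hξη, norm_zero] at hfar
  exact hfar.not_gt (mul_pos hδ (norm_pos_iff.2 hξ))

theorem kazhdan_pair_with_continuity_constants
    {A : Type*} [NormedRing A] [StarRing A] [CStarRing A] [NormedAlgebra ℂ A]
    [CompleteSpace A] [StarModule ℂ A]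
    (ε : A →⋆ₐ[ℂ] ℂ) (S : Finset A) (δ₀ : ℝ) (hδ₀ : 0 < δ₀)
    (hKazhdan : ∀ (K : Type u) [NormedAddCommGroup K] [InnerProductSpace ℂ K]
      [CompleteSpace K] (ρ : A →⋆ₐ[ℂ] (K →L[ℂ] K)),
      (∃ ξ : K, ξ ≠ 0 ∧ ∀ a ∈ S, ‖ρ a ξ - ε a • ξ‖ < δ₀ * ‖ξ‖) →
      ∃ η : K, η ≠ 0 ∧ ∀ a : A, ρ a η = ε a • η)
    (δ : ℝ) (hδ : 0 < δ)
    (H : Type u) [NormedAddCommGroup H] [InnerProductSpace ℂ H] [CompleteSpace H]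
    (π : A →⋆ₐ[ℂ] (H →L[ℂ] H))
    (ξ : H) (hξ : ξ ≠ 0)
    (hinv : ∀ a ∈ S, ‖π a ξ - ε a • ξ‖ < δ₀ * δ * ‖ξ‖) :
    ∃ η : H, (∀ a : A, π a η = ε a • η) ∧ ‖ξ - η‖ < δ * ‖ξ‖ :=
  kazhdan_pair_with_continuity_constants_general ε S δ₀ hδ₀ hKazhdan δ hδ H π ξ hξ hinv
end

section
/- Let δ > 0 and let ξ ∈ H be a unit vector such that ‖π(v)ξ − ε(v)ξ‖ ≤ δ for every unitary element v of A (i.e. every v ∈ A with v*v = vv* = 1). Then there exists a vector η ∈ H with ‖ξ − η‖ ≤ δ and π(a)η = ε(a)η for all a ∈ A. -/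
/-!
Twisting π by the conjugate character, `u ↦ conj (ε u) • π u` is a unitary representation of
the unitary group of `A`, and the hypothesis says that every vector of the orbit of `ξ` lies within
`δ` of `ξ`. The closed convex hull of the orbit is invariant under this isometric action, so its
unique element of minimal norm is a fixed vector, still within `δ` of `ξ`. Fixed vectors of the
twisted action are `ε`-eigenvectors of every unitary, hence of all of `A`, since the unitaries
span a C⋆-algebra.
-/

section Geometry

variable {E : Type*} [NormedAddCommGroup E] [NormedSpace ℝ E]

theorem Convex.eq_of_isMinOn_norm [StrictConvexSpace ℝ E] {K : Set E} (hK : Convex ℝ K)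
    {x y : E} (hx : x ∈ K) (hy : y ∈ K) (hmin : IsMinOn norm K x) (hyx : ‖y‖ ≤ ‖x‖) :
    y = x := by
  have hnorm : ‖y‖ = ‖x‖ := le_antisymm hyx (hmin hy)
  by_contra hne
  have hmid : (1 / 2 : ℝ) • (y + x) ∈ K := by
    rw [smul_add]
    exact hK hy hx (by norm_num) (by norm_num) (by norm_num)
  have hle : ‖x‖ ≤ ‖(1 / 2 : ℝ) • (y + x)‖ := hmin hmid
  linarith [(norm_midpoint_lt_iff hnorm).2 hne]

theorem IsClosed.exists_isMinOn_norm {F : Type*} [NormedAddCommGroup F] [InnerProductSpace ℝ F]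
    [CompleteSpace F] {K : Set F} (hne : K.Nonempty) (hK : IsClosed K) (hconv : Convex ℝ K) :
    ∃ x ∈ K, IsMinOn norm K x := by
  obtain ⟨x, hx, hmin⟩ := exists_norm_eq_iInf_of_complete_convex hne hK.isComplete hconv 0
  refine ⟨x, hx, fun w hw => ?_⟩
  have hle := ciInf_le ⟨0, Set.forall_mem_range.2 fun (w : K) => norm_nonneg (0 - (w : F))⟩
    (⟨w, hw⟩ : K)
  rw [← hmin] at hle
  simpa using hle

end Geometry

section FixedPoint

variable {𝕜 E : Type*} [RCLike 𝕜] [NormedAddCommGroup E] [InnerProductSpace 𝕜 E] [CompleteSpace E]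

theorem exists_norm_sub_le_forall_apply_eq_self {M : Type*} [Monoid M] (ρ : M →* (E →L[𝕜] E))
    (hρ : ∀ m x, ‖ρ m x‖ = ‖x‖) {ξ : E} {δ : ℝ} (hξ : ∀ m, ‖ρ m ξ - ξ‖ ≤ δ) :
    ∃ η, ‖ξ - η‖ ≤ δ ∧ ∀ m, ρ m η = η := by
  let _ := InnerProductSpace.rclikeToReal 𝕜 E
  set K := closedConvexHull ℝ (Set.range fun m => ρ m ξ)
  have hξK : ξ ∈ K := subset_closedConvexHull ⟨1, by simp⟩
  obtain ⟨η, hηK, hmin⟩ :=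
    isClosed_closedConvexHull.exists_isMinOn_norm ⟨ξ, hξK⟩ convex_closedConvexHull
  refine ⟨η, ?_, fun m => ?_⟩
  · have hKball : K ⊆ Metric.closedBall ξ δ :=
      closedConvexHull_min (Set.range_subset_iff.2 fun m => by simpa [dist_eq_norm] using hξ m)
        (convex_closedBall ξ δ) Metric.isClosed_closedBall
    simpa [dist_eq_norm'] using hKball hηK
  · have hmaps : K ⊆ ρ m ⁻¹' K := by
      refine closedConvexHull_min ?_ (convex_closedConvexHull.linear_preimage
        ((ρ m).toLinearMap.restrictScalars ℝ)) (isClosed_closedConvexHull.preimage (ρ m).continuous)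
      rintro _ ⟨n, rfl⟩
      exact subset_closedConvexHull ⟨m * n, by simp⟩
    exact convex_closedConvexHull.eq_of_isMinOn_norm hηK (hmaps hηK) hmin (hρ m η).le

end FixedPoint

section Twist

variable {A B : Type*} [Ring A] [StarRing A] [Algebra ℂ A] [Ring B] [StarRing B] [Algebra ℂ B]
  (π : A →⋆ₐ[ℂ] B) (ε : A →⋆ₐ[ℂ] ℂ)

def unitaryTwist : unitary A →* B where
  toFun u := star (ε u) • π u
  map_one' := by simp
  map_mul' u v := by simp only [Submonoid.coe_mul, map_mul, star_mul', smul_mul_smul_comm]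

variable {π ε}

theorem unitaryTwist_apply (u : unitary A) : unitaryTwist π ε u = star (ε u) • π u := rfl

theorem smul_unitaryTwist (u : unitary A) : ε u • unitaryTwist π ε u = π u := by
  rw [unitaryTwist_apply, smul_smul, ← map_star, ← map_mul, Unitary.mul_star_self_of_mem u.2,
    map_one, one_smul]

theorem unitaryTwist_mem_unitary [StarModule ℂ B] (u : unitary A) :
    unitaryTwist π ε u ∈ unitary B :=
  Unitary.smul_mem_of_mem (Unitary.star_mem (Unitary.map_mem ε u.2)) (Unitary.map_mem π u.2)

end Twist

theorem apply_eq_smul_of_forall_unitary {A H : Type*} [CStarAlgebra A] [NormedAddCommGroup H]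
    [InnerProductSpace ℂ H] [CompleteSpace H] (π : A →⋆ₐ[ℂ] (H →L[ℂ] H)) (ε : A →⋆ₐ[ℂ] ℂ) {η : H}
    (h : ∀ u : unitary A, π u η = ε u • η) (a : A) : π a η = ε a • η := by
  have := LinearMap.ext_on (CStarAlgebra.span_unitary A)
    (f := (ContinuousLinearMap.apply ℂ H η).toLinearMap ∘ₗ π.toLinearMap)
    (g := ε.toLinearMap.smulRight η) fun u hu => h ⟨u, hu⟩
  exact LinearMap.congr_fun this a

theorem invariant_vector_near_unitary_almost_invariant_general
    {A : Type*} [NormedRing A] [StarRing A] [CStarRing A] [NormedAlgebra ℂ A]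
    [CompleteSpace A] [StarModule ℂ A]
    {H : Type*} [NormedAddCommGroup H] [InnerProductSpace ℂ H] [CompleteSpace H]
    (π : A →⋆ₐ[ℂ] (H →L[ℂ] H)) (ε : A →⋆ₐ[ℂ] ℂ)
    (δ : ℝ) (ξ : H)
    (hinv : ∀ v : A, star v * v = 1 → v * star v = 1 → ‖π v ξ - ε v • ξ‖ ≤ δ) :
    ∃ η : H, ‖ξ - η‖ ≤ δ ∧ ∀ a : A, π a η = ε a • η := by
  have hε (u : unitary A) : ‖ε u‖ = 1 := CStarRing.norm_of_mem_unitary (Unitary.map_mem ε u.2)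
  have hρ (u : unitary A) (x : H) : ‖unitaryTwist π ε u x‖ = ‖x‖ :=
    ContinuousLinearMap.norm_map_of_mem_unitary (unitaryTwist_mem_unitary (B := H →L[ℂ] H) u) x
  have hξ (u : unitary A) : ‖unitaryTwist π ε u ξ - ξ‖ ≤ δ := by
    have := hinv u (Unitary.star_mul_self_of_mem u.2) (Unitary.mul_star_self_of_mem u.2)
    rwa [← smul_unitaryTwist, smul_apply, ← smul_sub, norm_smul, hε, one_mul] at this
  obtain ⟨η, hξη, hfix⟩ := exists_norm_sub_le_forall_apply_eq_self _ hρ hξ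
  let _ : CStarAlgebra A := {}
  refine ⟨η, hξη, apply_eq_smul_of_forall_unitary π ε fun u => ?_⟩
  rw [← smul_unitaryTwist, smul_apply, hfix]

theorem invariant_vector_near_unitary_almost_invariant
    {A : Type*} [NormedRing A] [StarRing A] [CStarRing A] [NormedAlgebra ℂ A]
    [CompleteSpace A] [StarModule ℂ A]
    {H : Type*} [NormedAddCommGroup H] [InnerProductSpace ℂ H] [CompleteSpace H]
    (π : A →⋆ₐ[ℂ] (H →L[ℂ] H)) (ε : A →⋆ₐ[ℂ] ℂ)
    (δ : ℝ) (hδ : 0 < δ) (ξ : H) (hξ : ‖ξ‖ = 1)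
    (hinv : ∀ v : A, star v * v = 1 → v * star v = 1 → ‖π v ξ - ε v • ξ‖ ≤ δ) :
    ∃ η : H, ‖ξ - η‖ ≤ δ ∧ ∀ a : A, π a η = ε a • η :=
  invariant_vector_near_unitary_almost_invariant_general π ε δ ξ hinv
end

section
/- Let x ∈ A satisfy ε(x) = 0, and let (yᵢ)ᵢ, (zᵢ)ᵢ be finite families in A with Δx = Σᵢ yᵢ ⊗ zᵢ. Then c((S(x))*) = − Σᵢ π((S(zᵢ))*) c(yᵢ*). -/
open scoped TensorProduct
open HopfAlgebra

theorem cocycle_antipode_formula_three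
    {A : Type*} [Ring A] [HopfAlgebra ℂ A]
    [StarRing A] [StarModule ℂ A]
    -- `A` is a Hopf *-algebra:
    (hΔstar : ∀ (x : A) (m : ℕ) (y z : Fin m → A),
      Coalgebra.comul (R := ℂ) x = ∑ i, y i ⊗ₜ[ℂ] z i →
      Coalgebra.comul (R := ℂ) (star x) = ∑ i, star (y i) ⊗ₜ[ℂ] star (z i))
    (hεstar : ∀ x : A,
      Coalgebra.counit (R := ℂ) (star x) = starRingEnd ℂ (Coalgebra.counit (R := ℂ) x))
    (hSstar : ∀ x : A, antipode (R := ℂ) (star (antipode (R := ℂ) (star x))) = x)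
    {H : Type*} [NormedAddCommGroup H] [InnerProductSpace ℂ H] [CompleteSpace H]
    (π : A →⋆ₐ[ℂ] (H →L[ℂ] H))
    (c : A →ₗ[ℂ] H)
    (hc : ∀ x y : A, c (x * y) = π x (c y) + Coalgebra.counit (R := ℂ) y • c x)
    (x : A) (hx : Coalgebra.counit (R := ℂ) x = 0)
    (m : ℕ) (y z : Fin m → A)
    (hxyz : Coalgebra.comul (R := ℂ) x = ∑ i, y i ⊗ₜ[ℂ] z i) :
    c (star (antipode (R := ℂ) x)) = - ∑ i, π (star (antipode (R := ℂ) (z i))) (c (star (y i))) := by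
  have h1 : (∑ i, y i * antipode (R := ℂ) (z i)) = 0 := by
    have h := mul_antipode_lTensor_comul_apply (R := ℂ) x
    rw [hxyz, hx] at h
    simpa [map_sum] using h
  have h2 : (∑ i, Coalgebra.counit (R := ℂ) (y i) • z i) = x := by
    have h := Coalgebra.rTensor_counit_comul (R := ℂ) x
    rw [hxyz] at h
    have h' := congrArg (TensorProduct.lid ℂ A) h
    simpa [map_sum] using h'
  have key : (0 : H) = ∑ i, (π (star (antipode (R := ℂ) (z i))) (c (star (y i))) +
      Coalgebra.counit (R := ℂ) (star (y i)) • c (star (antipode (R := ℂ) (z i)))) := by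
    calc (0 : H) = c (star (∑ i, y i * antipode (R := ℂ) (z i))) := by rw [h1]; simp
    _ = ∑ i, c (star (antipode (R := ℂ) (z i)) * star (y i)) := by
        rw [star_sum, map_sum]
        simp [star_mul]
    _ = _ := by simp [hc]
  have h3 : ∑ i, Coalgebra.counit (R := ℂ) (star (y i)) • c (star (antipode (R := ℂ) (z i))) =
      c (star (antipode (R := ℂ) x)) := by
    conv_rhs => rw [← h2]
    rw [map_sum, star_sum, map_sum]
    refine Finset.sum_congr rfl fun i _ => ?_
    rw [map_smul, star_smul, map_smul, hεstar, starRingEnd_apply]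
  rw [Finset.sum_add_distrib, h3] at key
  exact eq_neg_of_add_eq_zero_right key.symm
end

section
/- Let x, y ∈ A satisfy ε(x) = 0 and ε(y) = 0, and let (pⱼ)ⱼ, (qⱼ)ⱼ be finite families in A with Δ(x*y) = Σⱼ pⱼ ⊗ qⱼ. Then Σⱼ ⟨c(pⱼ), c(S(qⱼ*))⟩ = − ⟨c((S(x))*), c(S(y*))⟩ − ⟨c(y), c(x)⟩. (In particular, ψ(x*y) = −⟨c((Sx)*), c(S(y*))⟩ − ⟨c(y), c(x)⟩ for the functional ψ defined by ψ(x) = Σᵢ ⟨c(yᵢ), c(S(zᵢ*))⟩ whenever Δx = Σᵢ yᵢ ⊗ zᵢ.) -/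
/-!
Write `Δx = ∑ x₁ ⊗ x₂` and `Δy = ∑ y₁ ⊗ y₂`, so that `Δ(x* y) = ∑ x₁* y₁ ⊗ x₂* y₂`. The cocycle
rule applied to `c(x₁* y₁)` and to `c(S(y₂* x₂)) = c(S x₂ · S(y₂*))` splits every summand into
four terms. Applying `c` to `∑ x₁ S(x₂) = ε(x) 1` and to its star gives `∑ π(x₁) c(S x₂) = -c(x)`
and `∑ π((S x₂)*) c(x₁*) = -c((S x)*)`, since `c` kills the unit. After summing over the
coproduct of `x`, the first term contains `π(∑ (S x₂)* x₁*) = π((ε(x) 1)*)`, which vanishes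
because `ε(x) = 0`; the counit identities for `y` collapse the next two terms to the right-hand
side, and the last one carries the factor `∑ ε(y₁) ε(y₂) = ε(y) = 0`.
-/

open scoped TensorProduct InnerProductSpace
open HopfAlgebra Coalgebra

section Coalgebra

variable {R A : Type*} [CommSemiring R] [AddCommMonoid A] [Module R A] [Coalgebra R A]
  {ι : Type*} {a : A}

lemma Coalgebra.sum_counit_right_smul_left (r : Repr R a ι) :
    ∑ i ∈ r.index, counit (R := R) (r.right i) • r.left i = a := by
  simpa only [map_sum, TensorProduct.lift.tmul, LinearMap.flip_apply, LinearMap.lsmul_apply,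
    one_smul] using
    congr(TensorProduct.lift (LinearMap.lsmul R A).flip $(sum_tmul_counit_eq (R := R) r))

lemma Coalgebra.sum_counit_mul_counit (r : Repr R a ι) :
    ∑ i ∈ r.index, counit (R := R) (r.left i) * counit (R := R) (r.right i) = counit a := by
  simpa only [map_sum, map_smul, smul_eq_mul] using congr(counit (R := R) $(sum_counit_smul r))

end Coalgebra

lemma StarAlgHom.inner_apply_left {A H : Type*} [Semiring A] [Algebra ℂ A] [Star A]
    [NormedAddCommGroup H] [InnerProductSpace ℂ H] [CompleteSpace H]
    (π : A →⋆ₐ[ℂ] (H →L[ℂ] H)) (a : A) (u v : H) :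
    ⟪π a u, v⟫_ℂ = ⟪u, π (star a) v⟫_ℂ := by
  rw [map_star, ContinuousLinearMap.star_eq_adjoint, ContinuousLinearMap.adjoint_inner_right]

section Pairing

variable {A : Type*} [Ring A] [HopfAlgebra ℂ A] [StarRing A] [StarModule ℂ A]
  {H : Type*} [NormedAddCommGroup H] [InnerProductSpace ℂ H]

/-- In the paper's notation `ψ = cocyclePairing c ∘ₗ Δ`; pairing on the tensor product makes
`ψ` independent of the chosen representation of `Δ`. -/
noncomputable def cocyclePairing (c : A →ₗ[ℂ] H) : A ⊗[ℂ] A →ₗ[ℂ] ℂ :=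
  TensorProduct.lift <| LinearMap.mk₂ ℂ (fun p q ↦ ⟪c (antipode ℂ (star q)), c p⟫_ℂ)
    (fun _ _ _ ↦ by simp only [map_add, inner_add_right])
    (fun _ _ _ ↦ by simp only [map_smul, inner_smul_right, smul_eq_mul])
    (fun _ _ _ ↦ by simp only [star_add, map_add, inner_add_left])
    (fun _ _ _ ↦ by simp only [star_smul, map_smul, inner_smul_left, RCLike.star_def,
      RCLike.conj_conj, smul_eq_mul])

@[simp]
lemma cocyclePairing_tmul (c : A →ₗ[ℂ] H) (p q : A) :
    cocyclePairing c (p ⊗ₜ q) = ⟪c (antipode ℂ (star q)), c p⟫_ℂ :=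
  rfl

end Pairing

section Cocycle

variable {A : Type*} [Ring A] [HopfAlgebra ℂ A] [StarRing A]
  {H : Type*} [NormedAddCommGroup H] [InnerProductSpace ℂ H] [CompleteSpace H]

def IsCocycle (π : A →⋆ₐ[ℂ] (H →L[ℂ] H)) (c : A →ₗ[ℂ] H) : Prop :=
  ∀ x y : A, c (x * y) = π x (c y) + counit (R := ℂ) y • c x

variable {π : A →⋆ₐ[ℂ] (H →L[ℂ] H)} {c : A →ₗ[ℂ] H} {ι : Type*} {x : A}

namespace IsCocycle

lemma map_one (hc : IsCocycle π c) : c 1 = 0 := by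
  simpa using hc 1 1

lemma map_smul_one (hc : IsCocycle π c) (z : ℂ) : c (z • 1) = 0 := by
  rw [map_smul, hc.map_one, smul_zero]

lemma sum_apply_antipode (hc : IsCocycle π c) (r : Repr ℂ x ι) :
    ∑ i ∈ r.index, π (r.left i) (c (antipode ℂ (r.right i))) = -c x := by
  have h := congr(c $(sum_mul_antipode_eq_smul r))
  simp only [map_sum, hc _ _, counit_antipode, Finset.sum_add_distrib, hc.map_smul_one] at h
  simp_rw [← map_smul, ← map_sum, sum_counit_right_smul_left] at h
  exact eq_neg_of_add_eq_zero_left h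

lemma inner_antipode_star_mul
    (hεstar : ∀ x : A, counit (R := ℂ) (star x) = starRingEnd ℂ (counit (R := ℂ) x))
    (hc : IsCocycle π c) (u v a b : A) :
    ⟪c (antipode ℂ (star (star v * b))), c (star u * a)⟫_ℂ =
      ⟪c (antipode ℂ (star b)), π (star (antipode ℂ v) * star u) (c a)⟫_ℂ
      + counit a * ⟪c (antipode ℂ (star b)), π (star (antipode ℂ v)) (c (star u))⟫_ℂ
      + counit b * ⟪π u (c (antipode ℂ v)), c a⟫_ℂ
      + counit a * counit b * ⟪c (antipode ℂ v), c (star u)⟫_ℂ := by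
  rw [star_mul, star_star, antipode_mul_antidistrib, hc, hc, counit_antipode, hεstar]
  simp only [inner_add_left, inner_add_right, inner_smul_left, inner_smul_right,
    π.inner_apply_left, map_mul, mul_apply_eq_comp, RCLike.conj_conj]
  ring

variable [StarModule ℂ A]

lemma sum_apply_star_antipode
    (hεstar : ∀ x : A, counit (R := ℂ) (star x) = starRingEnd ℂ (counit (R := ℂ) x))
    (hc : IsCocycle π c) (r : Repr ℂ x ι) :
    ∑ i ∈ r.index, π (star (antipode ℂ (r.right i))) (c (star (r.left i))) =
      -c (star (antipode ℂ x)) := by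
  have h := congr(c (star $(sum_mul_antipode_eq_smul r)))
  simp only [star_sum, star_mul, star_smul, star_one, map_sum, hc _ _, hεstar,
    Finset.sum_add_distrib, hc.map_smul_one] at h
  have hcounit : ∑ i ∈ r.index,
      starRingEnd ℂ (counit (r.left i)) • c (star (antipode ℂ (r.right i))) =
        c (star (antipode ℂ x)) := by
    conv_rhs => rw [← sum_counit_smul r]
    simp only [map_sum, star_sum, map_smul, star_smul, starRingEnd_apply]
  rw [hcounit] at h
  exact eq_neg_of_add_eq_zero_left h

lemma sum_sum_inner_antipode_star_mul
    (hεstar : ∀ x : A, counit (R := ℂ) (star x) = starRingEnd ℂ (counit (R := ℂ) x))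
    (hc : IsCocycle π c) {κ : Type*} {y : A}
    (hx : counit (R := ℂ) x = 0) (hy : counit (R := ℂ) y = 0)
    (r : Repr ℂ x ι) (s : Repr ℂ y κ) :
    ∑ k ∈ s.index, ∑ i ∈ r.index,
        ⟪c (antipode ℂ (star (star (r.right i) * s.right k))),
          c (star (r.left i) * s.left k)⟫_ℂ =
      -⟪c (antipode ℂ (star y)), c (star (antipode ℂ x))⟫_ℂ - ⟪c x, c y⟫_ℂ := by
  simp only [hc.inner_antipode_star_mul hεstar, Finset.sum_add_distrib]
  have h₁ : ∑ k ∈ s.index, ∑ i ∈ r.index, ⟪c (antipode ℂ (star (s.right k))),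
      π (star (antipode ℂ (r.right i)) * star (r.left i)) (c (s.left k))⟫_ℂ = 0 := by
    have hzero : ∑ i ∈ r.index, star (antipode ℂ (r.right i)) * star (r.left i) = 0 := by
      simpa [star_sum, hx] using congr(star $(sum_mul_antipode_eq_smul r))
    refine Finset.sum_eq_zero fun k _ ↦ ?_
    rw [← inner_sum, ← sum_apply, ← map_sum, hzero, map_zero, zero_apply, inner_zero_right]
  have h₂ : ∑ k ∈ s.index, ∑ i ∈ r.index, counit (s.left k) *
      ⟪c (antipode ℂ (star (s.right k))),
        π (star (antipode ℂ (r.right i))) (c (star (r.left i)))⟫_ℂ =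
      -⟪c (antipode ℂ (star y)), c (star (antipode ℂ x))⟫_ℂ := by
    simp only [← Finset.mul_sum, ← inner_sum, hc.sum_apply_star_antipode hεstar r]
    conv_rhs => rw [← sum_counit_smul s]
    simp only [star_sum, star_smul, map_sum, map_smul, sum_inner, inner_smul_left, inner_neg_right,
      mul_neg, Finset.sum_neg_distrib, RCLike.star_def, RCLike.conj_conj]
  have h₃ : ∑ k ∈ s.index, ∑ i ∈ r.index, counit (s.right k) *
      ⟪π (r.left i) (c (antipode ℂ (r.right i))), c (s.left k)⟫_ℂ =
      -⟪c x, c y⟫_ℂ := by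
    simp only [← Finset.mul_sum, ← sum_inner, hc.sum_apply_antipode r]
    conv_rhs => rw [← sum_counit_right_smul_left s]
    simp only [map_sum, map_smul, inner_sum, inner_smul_right, inner_neg_left, mul_neg,
      Finset.sum_neg_distrib]
  have h₄ : ∑ k ∈ s.index, ∑ i ∈ r.index, counit (s.left k) * counit (s.right k) *
      ⟪c (antipode ℂ (r.right i)), c (star (r.left i))⟫_ℂ = 0 := by
    simp only [← Finset.mul_sum, ← Finset.sum_mul, sum_counit_mul_counit, hy, zero_mul]
  rw [h₁, h₂, h₃, h₄]
  ring

end IsCocycle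

end Cocycle

-- The paper's inner product `⟨u, v⟫` is linear in `u`; it equals Mathlib's `⟪v, u⟫_ℂ`.
theorem generator_on_products_general
    {A : Type*} [Ring A] [HopfAlgebra ℂ A]
    [StarRing A] [StarModule ℂ A]
    -- `A` is a Hopf *-algebra:
    (hΔstar : ∀ (x : A) (m : ℕ) (y z : Fin m → A),
      Coalgebra.comul (R := ℂ) x = ∑ i, y i ⊗ₜ[ℂ] z i →
      Coalgebra.comul (R := ℂ) (star x) = ∑ i, star (y i) ⊗ₜ[ℂ] star (z i))
    (hεstar : ∀ x : A,
      Coalgebra.counit (R := ℂ) (star x) = starRingEnd ℂ (Coalgebra.counit (R := ℂ) x))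
    {H : Type*} [NormedAddCommGroup H] [InnerProductSpace ℂ H] [CompleteSpace H]
    (π : A →⋆ₐ[ℂ] (H →L[ℂ] H))
    (c : A →ₗ[ℂ] H)
    (hc : ∀ x y : A, c (x * y) = π x (c y) + Coalgebra.counit (R := ℂ) y • c x)
    (x y : A) (hx : Coalgebra.counit (R := ℂ) x = 0) (hy : Coalgebra.counit (R := ℂ) y = 0)
    (m : ℕ) (p q : Fin m → A)
    (hpq : Coalgebra.comul (R := ℂ) (star x * y) = ∑ j, p j ⊗ₜ[ℂ] q j) :
    ∑ j, ⟪c (antipode (R := ℂ) (star (q j))), c (p j)⟫_ℂ =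
      - ⟪c (antipode (R := ℂ) (star y)), c (star (antipode (R := ℂ) x))⟫_ℂ
      - ⟪c x, c y⟫_ℂ := by
  obtain ⟨n, x₁, x₂, hx₁₂⟩ := TensorProduct.exists_sum_tmul_eq (comul (R := ℂ) x)
  let r : Repr ℂ x (Fin n) := ⟨Finset.univ, x₁, x₂, hx₁₂.symm⟩
  let rstar : Repr ℂ (star x) (Fin n) :=
    ⟨Finset.univ, star ∘ x₁, star ∘ x₂, (hΔstar x n x₁ x₂ hx₁₂).symm⟩
  let s := ℛ ℂ y
  calc ∑ j, ⟪c (antipode ℂ (star (q j))), c (p j)⟫_ℂ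
      = cocyclePairing c (comul (star x * y)) := by
        simp only [hpq, map_sum, cocyclePairing_tmul]
    _ = ∑ k ∈ s.index, ∑ i ∈ r.index,
          ⟪c (antipode ℂ (star (star (r.right i) * s.right k))),
            c (star (r.left i) * s.left k)⟫_ℂ := by
        rw [← (rstar.mul s).eq, map_sum, Repr.mul_index, Finset.sum_product_right]
        simp only [Repr.mul_left, Repr.mul_right, Function.comp_apply, cocyclePairing_tmul,
          rstar, r]
    _ = _ := IsCocycle.sum_sum_inner_antipode_star_mul hεstar hc hx hy r s

theorem generator_on_products
    {A : Type*} [Ring A] [HopfAlgebra ℂ A]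
    [StarRing A] [StarModule ℂ A]
    -- `A` is a Hopf *-algebra:
    (hΔstar : ∀ (x : A) (m : ℕ) (y z : Fin m → A),
      Coalgebra.comul (R := ℂ) x = ∑ i, y i ⊗ₜ[ℂ] z i →
      Coalgebra.comul (R := ℂ) (star x) = ∑ i, star (y i) ⊗ₜ[ℂ] star (z i))
    (hεstar : ∀ x : A,
      Coalgebra.counit (R := ℂ) (star x) = starRingEnd ℂ (Coalgebra.counit (R := ℂ) x))
    (hSstar : ∀ x : A, antipode (R := ℂ) (star (antipode (R := ℂ) (star x))) = x)
    {H : Type*} [NormedAddCommGroup H] [InnerProductSpace ℂ H] [CompleteSpace H]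
    (π : A →⋆ₐ[ℂ] (H →L[ℂ] H))
    (c : A →ₗ[ℂ] H)
    (hc : ∀ x y : A, c (x * y) = π x (c y) + Coalgebra.counit (R := ℂ) y • c x)
    (x y : A) (hx : Coalgebra.counit (R := ℂ) x = 0) (hy : Coalgebra.counit (R := ℂ) y = 0)
    (m : ℕ) (p q : Fin m → A)
    (hpq : Coalgebra.comul (R := ℂ) (star x * y) = ∑ j, p j ⊗ₜ[ℂ] q j) :
    ∑ j, ⟪c (antipode (R := ℂ) (star (q j))), c (p j)⟫_ℂ =
      - ⟪c (antipode (R := ℂ) (star y)), c (star (antipode (R := ℂ) x))⟫_ℂ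
      - ⟪c x, c y⟫_ℂ :=
  generator_on_products_general hΔstar hεstar π c hc x y hx hy m p q hpq
end

section
/- Assume the cocycle c is real, i.e. ⟨c(S(y*)), c((S(x))*)⟩ = ⟨c(x), c(y)⟩ for all x, y ∈ A. Then the functional ψ is hermitian: for every x ∈ A and all finite families (yᵢ)ᵢ, (zᵢ)ᵢ with Δx = Σᵢ yᵢ ⊗ zᵢ and (pⱼ)ⱼ, (qⱼ)ⱼ with Δ(x*) = Σⱼ pⱼ ⊗ qⱼ, one has Σⱼ ⟨c(pⱼ), c(S(qⱼ*))⟩ = conjugate of Σᵢ ⟨c(yᵢ), c(S(zᵢ*))⟩; that is, ψ(x*) = conj(ψ(x)) where ψ(x) = Σᵢ ⟨c(yᵢ), c(S(zᵢ*))⟩ whenever Δx = Σᵢ yᵢ ⊗ zᵢ. -/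
/-!
Writing `a₁ ⊗ a₂` for `Δa`, the cocycle identity applied to `S(a₁)a₂ = ε(a)1 = a₁S(a₂)` gives
`c(Sa) = -π(Sa₁)c(a₂)` and `c((Sa)*) = -π(Sa₂)* c(a₁*)`. Pairing these with `c` and evaluating the
functional `a ⊗ b ⊗ d ↦ ⟨π(Sb)c(d), c(a*)⟩` on both sides of coassociativity yields
`⟨c(x₁*), c(Sx₂)⟩ = ⟨c((Sx₁)*), c(x₂)⟩`. Since `Δ(x*) = x₁* ⊗ x₂*`, the left side is `ψ(x*)`,
while reality of `c` identifies the right side with `conj ψ(x)`.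
-/

open scoped TensorProduct InnerProductSpace ComplexConjugate
open HopfAlgebra Coalgebra

section Cocycle

variable {R A M : Type*} [CommRing R] [Ring A] [HopfAlgebra R A] [AddCommGroup M] [Module R M]
  {ρ : A →* Module.End R M} {c : A →ₗ[R] M}

lemma Coalgebra.Repr.sum_counit_right_smul {ι : Type*} {a : A} (r : Repr R a ι) :
    ∑ j ∈ r.index, counit (R := R) (r.right j) • r.left j = a := by
  simpa only [map_sum, _root_.TensorProduct.rid_tmul, one_smul] using
    congrArg (_root_.TensorProduct.rid R A) (sum_tmul_counit_eq r)

variable (hc : ∀ x y : A, c (x * y) = ρ x (c y) + counit (R := R) y • c x)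
include hc

lemma cocycle_map_one_eq_zero : c 1 = 0 := by
  simpa [Bialgebra.counit_one] using hc 1 1

lemma sum_rep_antipode_cocycle_eq_neg {ι : Type*} {a : A} (r : Repr R a ι) :
    ∑ j ∈ r.index, ρ (antipode R (r.left j)) (c (r.right j)) = -c (antipode R a) := by
  have hterm : ∀ j, ρ (antipode R (r.left j)) (c (r.right j)) =
      c (antipode R (r.left j) * r.right j) -
        counit (R := R) (r.right j) • c (antipode R (r.left j)) :=
    fun j => eq_sub_of_add_eq (hc _ _).symm
  calc ∑ j ∈ r.index, ρ (antipode R (r.left j)) (c (r.right j))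
      = c (∑ j ∈ r.index, antipode R (r.left j) * r.right j) -
          c (antipode R (∑ j ∈ r.index, counit (R := R) (r.right j) • r.left j)) := by
        simp only [hterm, Finset.sum_sub_distrib, map_sum, map_smul]
    _ = -c (antipode R a) := by
        rw [sum_antipode_mul_eq_smul, r.sum_counit_right_smul, map_smul, cocycle_map_one_eq_zero hc,
          smul_zero, zero_sub]

lemma sum_rep_star_antipode_cocycle_star_eq_neg [StarRing R] [StarRing A] [StarModule R A]
    (hε : ∀ x : A, counit (R := R) (star x) = star (counit (R := R) x))
    {ι : Type*} {a : A} (r : Repr R a ι) :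
    ∑ j ∈ r.index, ρ (star (antipode R (r.right j))) (c (star (r.left j))) =
      -c (star (antipode R a)) := by
  have hterm : ∀ j, ρ (star (antipode R (r.right j))) (c (star (r.left j))) =
      c (star (r.left j * antipode R (r.right j))) -
        star (counit (R := R) (r.left j)) • c (star (antipode R (r.right j))) := by
    intro j
    rw [star_mul, hc, hε, add_sub_cancel_right]
  calc ∑ j ∈ r.index, ρ (star (antipode R (r.right j))) (c (star (r.left j)))
      = c (star (∑ j ∈ r.index, r.left j * antipode R (r.right j))) -
          c (star (antipode R (∑ j ∈ r.index, counit (R := R) (r.left j) • r.right j))) := by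
        simp only [hterm, Finset.sum_sub_distrib, map_sum, star_sum, map_smul, star_smul]
    _ = -c (star (antipode R a)) := by
        rw [sum_mul_antipode_eq_smul, sum_counit_smul, star_smul, star_one, map_smul,
          cocycle_map_one_eq_zero hc, smul_zero, zero_sub]

end Cocycle

section InnerPairing

variable {𝕜 M N H : Type*} [RCLike 𝕜] [AddCommMonoid M] [Module 𝕜 M]
  [AddCommMonoid N] [Module 𝕜 N] [NormedAddCommGroup H] [InnerProductSpace 𝕜 H]

noncomputable def innerPairing (f : M →ₗ⋆[𝕜] H) (g : N →ₗ[𝕜] H) :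
    M ⊗[𝕜] N →ₗ[𝕜] 𝕜 :=
  TensorProduct.lift ((innerₛₗ 𝕜 ∘ₛₗ f).compl₂ g)

@[simp] lemma innerPairing_tmul (f : M →ₗ⋆[𝕜] H) (g : N →ₗ[𝕜] H) (m : M) (n : N) :
    innerPairing f g (m ⊗ₜ n) = ⟪f m, g n⟫_𝕜 := rfl

end InnerPairing

section Hermitian

variable {A H : Type*} [Ring A] [HopfAlgebra ℂ A] [StarRing A] [StarModule ℂ A]
  [NormedAddCommGroup H] [InnerProductSpace ℂ H] [CompleteSpace H]
  {π : A →⋆ₐ[ℂ] (H →L[ℂ] H)} {c : A →ₗ[ℂ] H}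

lemma sum_inner_cocycle_antipode_swap
    (hc : ∀ x y : A, c (x * y) = π x (c y) + counit (R := ℂ) y • c x)
    (hε : ∀ x : A, counit (R := ℂ) (star x) = starRingEnd ℂ (counit (R := ℂ) x))
    {ι : Type*} {a : A} (r : Repr ℂ a ι) :
    ∑ i ∈ r.index, ⟪c (star (antipode ℂ (r.left i))), c (r.right i)⟫_ℂ =
      ∑ i ∈ r.index, ⟪c (star (r.left i)), c (antipode ℂ (r.right i))⟫_ℂ := by
  let ρ : A →* Module.End ℂ H :=
    (ContinuousLinearMap.toLinearMapRingHom : (H →L[ℂ] H) →+* _).toMonoidHom.comp π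
  let Φ : A ⊗[ℂ] (A ⊗[ℂ] A) →ₗ[ℂ] ℂ :=
    innerPairing (c.comp (starLinearEquiv ℂ).toLinearMap)
      (TensorProduct.lift
        ((ContinuousLinearMap.coeLM ℂ ∘ₗ π.toLinearMap ∘ₗ antipode ℂ).compl₂ c))
  have hΦ : ∀ a b d : A,
      Φ (a ⊗ₜ (b ⊗ₜ d)) = ⟪c (star a), π (antipode ℂ b) (c d)⟫_ℂ := fun _ _ _ => rfl
  have hcoassoc := congrArg Φ
    (sum_tmul_tmul_eq r (fun i => ℛ ℂ (r.left i)) (fun i => ℛ ℂ (r.right i)))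
  simp only [map_sum, hΦ] at hcoassoc
  have hleft : ∀ i, ∑ j ∈ (ℛ ℂ (r.left i)).index,
      ⟪c (star ((ℛ ℂ (r.left i)).left j)),
        π (antipode ℂ ((ℛ ℂ (r.left i)).right j)) (c (r.right i))⟫_ℂ =
      -⟪c (star (antipode ℂ (r.left i))), c (r.right i)⟫_ℂ := by
    intro i
    rw [← inner_neg_left, ← sum_rep_star_antipode_cocycle_star_eq_neg (ρ := ρ) hc hε,
      sum_inner]
    refine Finset.sum_congr rfl fun j _ => ?_
    rw [← ContinuousLinearMap.adjoint_inner_left, ← ContinuousLinearMap.star_eq_adjoint,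
      ← map_star]
    rfl
  have hright : ∀ i, ∑ j ∈ (ℛ ℂ (r.right i)).index,
      ⟪c (star (r.left i)),
        π (antipode ℂ ((ℛ ℂ (r.right i)).left j)) (c ((ℛ ℂ (r.right i)).right j))⟫_ℂ =
      -⟪c (star (r.left i)), c (antipode ℂ (r.right i))⟫_ℂ := by
    intro i
    rw [← inner_neg_right, ← sum_rep_antipode_cocycle_eq_neg (ρ := ρ) hc, inner_sum]
    rfl
  simpa only [hleft, hright, Finset.sum_neg_distrib, neg_inj] using hcoassoc

end Hermitian

-- The paper's inner product `⟨u, v⟩` is linear in `u`; it equals Mathlib's `⟪v, u⟫_ℂ`.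
theorem real_cocycle_generator_hermitian
    {A : Type*} [Ring A] [HopfAlgebra ℂ A]
    [StarRing A] [StarModule ℂ A]
    -- `A` is a Hopf *-algebra:
    (hΔstar : ∀ (x : A) (m : ℕ) (y z : Fin m → A),
      Coalgebra.comul (R := ℂ) x = ∑ i, y i ⊗ₜ[ℂ] z i →
      Coalgebra.comul (R := ℂ) (star x) = ∑ i, star (y i) ⊗ₜ[ℂ] star (z i))
    (hεstar : ∀ x : A,
      Coalgebra.counit (R := ℂ) (star x) = starRingEnd ℂ (Coalgebra.counit (R := ℂ) x))
    (hSstar : ∀ x : A, antipode (R := ℂ) (star (antipode (R := ℂ) (star x))) = x)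
    {H : Type*} [NormedAddCommGroup H] [InnerProductSpace ℂ H] [CompleteSpace H]
    (π : A →⋆ₐ[ℂ] (H →L[ℂ] H))
    (c : A →ₗ[ℂ] H)
    (hc : ∀ x y : A, c (x * y) = π x (c y) + Coalgebra.counit (R := ℂ) y • c x)
    -- `c` is a real cocycle: `⟨c(S(y*)), c((Sx)*)⟩ = ⟨c(x), c(y)⟩` for all `x, y ∈ A`
    (hreal : ∀ x y : A,
      ⟪c (star (antipode (R := ℂ) x)), c (antipode (R := ℂ) (star y))⟫_ℂ = ⟪c y, c x⟫_ℂ) :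
    ∀ (x : A) (m : ℕ) (y z : Fin m → A) (m' : ℕ) (p q : Fin m' → A),
      Coalgebra.comul (R := ℂ) x = ∑ i, y i ⊗ₜ[ℂ] z i →
      Coalgebra.comul (R := ℂ) (star x) = ∑ j, p j ⊗ₜ[ℂ] q j →
      ∑ j, ⟪c (antipode (R := ℂ) (star (q j))), c (p j)⟫_ℂ =
        conj (∑ i, ⟪c (antipode (R := ℂ) (star (z i))), c (y i)⟫_ℂ) := by
  intro x m y z m' p q hx hxstar
  have hψ : ∑ j, ⟪c (antipode ℂ (star (q j))), c (p j)⟫_ℂ =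
      ∑ i, ⟪c (antipode ℂ (z i)), c (star (y i))⟫_ℂ := by
    simpa [map_sum] using congrArg
      (innerPairing ((c ∘ₗ antipode ℂ).comp (starLinearEquiv ℂ).toLinearMap) c ∘ₗ
        (TensorProduct.comm ℂ A A).toLinearMap)
      (hxstar.symm.trans (hΔstar x m y z hx))
  have hconj : ∀ i, conj ⟪c (antipode ℂ (star (z i))), c (y i)⟫_ℂ =
      conj ⟪c (star (antipode ℂ (y i))), c (z i)⟫_ℂ := by
    intro i
    have hinvol : star (antipode ℂ (star (antipode ℂ (y i)))) = y i := by
      simpa using congrArg star (hSstar (star (y i)))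
    rw [inner_conj_symm, inner_conj_symm, ← hreal (star (antipode ℂ (y i))) (z i), hinvol]
  have hswap := sum_inner_cocycle_antipode_swap hc hεstar ⟨Finset.univ, y, z, hx.symm⟩
  rw [hψ, map_sum, Finset.sum_congr rfl fun i _ => hconj i, ← map_sum]
  simpa only [map_sum, inner_conj_symm] using congrArg conj hswap.symm
end

section
/- Suppose there exist a finite set S ⊆ A and δ > 0 such that for every ξ ∈ H one has max_{a ∈ S} ‖π(a)ξ − ε(a)ξ‖ ≥ δ‖ξ‖ (i.e. π does not have almost invariant vectors). If c : A → H is a ℂ-linear map and (ξ_n) is a sequence in H such that π(a)ξ_n − ε(a)ξ_n converges to c(a) in H for every a ∈ A, then there exists ξ ∈ H with c(a) = π(a)ξ − ε(a)ξ for all a ∈ A. In particular, the space of inner cocycles is closed under pointwise limits. -/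
open Filter Topology

theorem pointwise_limit_of_inner_cocycles_is_inner
    {A : Type*} [Ring A] [Algebra ℂ A]
    {H : Type*} [NormedAddCommGroup H] [InnerProductSpace ℂ H] [CompleteSpace H]
    (π : A →ₐ[ℂ] (H →L[ℂ] H)) (ε : A →ₐ[ℂ] ℂ)
    -- `π` does not have almost invariant vectors:
    (S : Finset A) (hS : S.Nonempty) (δ : ℝ) (hδ : 0 < δ)
    (hbound : ∀ ξ : H, ∃ a ∈ S, δ * ‖ξ‖ ≤ ‖π a ξ - ε a • ξ‖)
    (c : A →ₗ[ℂ] H)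
    (ξ : ℕ → H)
    (hlim : ∀ a : A, Tendsto (fun n => π a (ξ n) - ε a • ξ n) atTop (𝓝 (c a))) :
    ∃ ζ : H, ∀ a : A, c a = π a ζ - ε a • ζ := by
  -- the sequence ξ is Cauchy
  have hcauchy : CauchySeq ξ := by
    rw [Metric.cauchySeq_iff]
    intro η hη
    have hδη : 0 < δ * η := mul_pos hδ hη
    choose N hN using fun a : A =>
      Metric.cauchySeq_iff.1 (hlim a).cauchySeq (δ * η) hδη
    refine ⟨S.sup N, fun m hm n hn => ?_⟩
    obtain ⟨a, haS, ha⟩ := hbound (ξ m - ξ n)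
    have hNa : N a ≤ S.sup N := Finset.le_sup haS
    have key : π a (ξ m - ξ n) - ε a • (ξ m - ξ n)
        = (π a (ξ m) - ε a • ξ m) - (π a (ξ n) - ε a • ξ n) := by
      simp [map_sub, smul_sub]; abel
    have hd := hN a m (le_trans hNa hm) n (le_trans hNa hn)
    rw [dist_eq_norm] at hd ⊢
    have : δ * ‖ξ m - ξ n‖ < δ * η := by
      calc δ * ‖ξ m - ξ n‖ ≤ ‖π a (ξ m - ξ n) - ε a • (ξ m - ξ n)‖ := ha
        _ = ‖(π a (ξ m) - ε a • ξ m) - (π a (ξ n) - ε a • ξ n)‖ := by rw [key]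
        _ < δ * η := hd
    exact lt_of_mul_lt_mul_left this hδ.le
  obtain ⟨ζ, hζ⟩ := cauchySeq_tendsto_of_complete hcauchy
  refine ⟨ζ, fun a => ?_⟩
  have h1 : Tendsto (fun n => π a (ξ n) - ε a • ξ n) atTop (𝓝 (π a ζ - ε a • ζ)) := by
    exact Tendsto.sub ((π a).continuous.tendsto ζ |>.comp hζ) (hζ.const_smul (ε a))
  exact tendsto_nhds_unique (hlim a) h1
end
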